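/- arXiv:2011.12369 — 3 statements merged into one kernel-verified Lean document; each statement's English description precedes it below -/
import Mathlib

section
/- If a connected graph G has a cut vertex (point of articulation), then the algebraic connectivity λ₂(G) satisfies λ₂(G) ≤ 1. -/
open Matrix BigOperators

variable {V : Type*} [Fintype V] [DecidableEq V]

/-- A cut vertex (point of articulation): its removal disconnects the graph. -/
def IsCutVertex (G : SimpleGraph V) (v : V) : Prop :=
  ¬ (G.induce {w : V | w ≠ v}).Connected

/-- The algebraic connectivity: the second smallest Laplacian eigenvalue, characterized
as the minimum Rayleigh quotient over nonzero vectors orthogonal to the all-ones vector. -/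
noncomputable def algConn (G : SimpleGraph V) [DecidableRel G.Adj] : ℝ :=
  sInf {r : ℝ | ∃ x : V → ℝ, x ≠ 0 ∧ (∑ v, x v) = 0 ∧
    r = (x ⬝ᵥ (G.lapMatrix ℝ) *ᵥ x) / (x ⬝ᵥ x)}

/-!
Removing the cut vertex `v` splits the remaining vertices into a nonempty set `A`, closed under
the edges avoiding `v`, and a nonempty rest `B`. The test vector equal to `|B|` on `A`, `-|A|` on
`B` and `0` at `v` is orthogonal to the constants and constant along every edge avoiding `v`, so
only the edges `vj` contribute to its Laplacian form, each by `x j ^ 2`. Hence its Rayleigh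
quotient is at most `1`.
-/

theorem algConn_le_rayleigh (G : SimpleGraph V) [DecidableRel G.Adj] {x : V → ℝ}
    (hx : x ≠ 0) (hsum : ∑ i, x i = 0) :
    algConn G ≤ (x ⬝ᵥ G.lapMatrix ℝ *ᵥ x) / (x ⬝ᵥ x) := by
  refine csInf_le ⟨0, ?_⟩ ⟨x, hx, hsum, rfl⟩
  rintro _ ⟨y, -, -, rfl⟩
  exact div_nonneg ((SimpleGraph.posSemidef_lapMatrix ℝ G).dotProduct_mulVec_nonneg y)
    (dotProduct_self_star_nonneg y)

theorem dotProduct_lapMatrix_mulVec_le_dotProduct_self (G : SimpleGraph V) [DecidableRel G.Adj]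
    {x : V → ℝ} {v : V} (hv : x v = 0)
    (hconst : ∀ i j, G.Adj i j → i ≠ v → j ≠ v → x i = x j) :
    x ⬝ᵥ G.lapMatrix ℝ *ᵥ x ≤ x ⬝ᵥ x := by
  have hterm : ∀ i j, (if G.Adj i j then (x i - x j) ^ 2 else 0) ≤
      (if j = v then x i ^ 2 else 0) + (if i = v then x j ^ 2 else 0) := by
    intro i j
    by_cases hij : G.Adj i j
    · by_cases hi : i = v
      · subst hi
        simp [hij, hij.ne.symm, hv]
      · by_cases hj : j = v
        · subst hj
          simp [hij, hi, hv]
        · simp [hij, hi, hj, hconst i j hij hi hj]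
    · simp only [hij, if_false]
      positivity
  calc x ⬝ᵥ G.lapMatrix ℝ *ᵥ x
      = (∑ i, ∑ j, if G.Adj i j then (x i - x j) ^ 2 else 0) / 2 := by
        rw [← toLinearMap₂'_apply', SimpleGraph.lapMatrix_toLinearMap₂']
    _ ≤ (∑ i, ∑ j, ((if j = v then x i ^ 2 else 0) + (if i = v then x j ^ 2 else 0))) / 2 := by
        gcongr with i _ j _
        exact hterm i j
    _ = x ⬝ᵥ x := by
        simp only [Finset.sum_add_distrib, Finset.sum_ite_eq', Finset.mem_univ, if_true,
          Finset.sum_ite_irrel, Finset.sum_const_zero, dotProduct, sq]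
        ring

def balancedVector {ι : Type*} [DecidableEq ι] (A B : Finset ι) : ι → ℝ :=
  fun i => (if i ∈ A then (B.card : ℝ) else 0) - (if i ∈ B then (A.card : ℝ) else 0)

theorem sum_balancedVector (A B : Finset V) : ∑ i, balancedVector A B i = 0 := by
  simp only [balancedVector, Finset.sum_sub_distrib, Finset.sum_ite_mem, Finset.univ_inter,
    Finset.sum_const, nsmul_eq_mul]
  ring

theorem balancedVector_ne_zero {ι : Type*} [DecidableEq ι] {A B : Finset ι} (hAB : Disjoint A B)
    (hA : A.Nonempty) (hB : B.Nonempty) : balancedVector A B ≠ 0 := by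
  obtain ⟨a, ha⟩ := hA
  intro h
  have := congrFun h a
  simp [balancedVector, ha, Finset.disjoint_left.1 hAB ha, hB.ne_empty] at this

theorem IsCutVertex.exists_separation {G : SimpleGraph V} {v : V} (hv : IsCutVertex G v)
    (hcard : 2 ≤ Fintype.card V) :
    ∃ A : Finset V, v ∉ A ∧ A.Nonempty ∧ (Finset.univ \ insert v A).Nonempty ∧
      ∀ i j, G.Adj i j → j ≠ v → i ∈ A → j ∈ A := by
  classical
  obtain ⟨w, hw⟩ := Fintype.exists_ne_of_one_lt_card hcard v
  have : Nonempty {i : V | i ≠ v} := ⟨⟨w, hw⟩⟩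
  obtain ⟨a, b, hab⟩ : ∃ a b, ¬ (G.induce {i : V | i ≠ v}).Reachable a b := by
    by_contra! h
    exact hv ⟨h⟩
  refine ⟨Finset.univ.filter fun i =>
      ∃ hi : i ≠ v, (G.induce {i : V | i ≠ v}).Reachable a ⟨i, hi⟩, ?_, ⟨a, ?_⟩, ⟨b, ?_⟩, ?_⟩
  · simp
  · simp only [Finset.mem_filter, Finset.mem_univ, true_and]
    exact ⟨a.2, .rfl⟩
  · simp only [Finset.mem_sdiff, Finset.mem_univ, Finset.mem_insert, Finset.mem_filter, true_and,
      not_or]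
    exact ⟨b.2, fun ⟨_, hab'⟩ => hab hab'⟩
  · simp only [Finset.mem_filter, Finset.mem_univ, true_and]
    rintro i j hij hj ⟨hi, hai⟩
    exact ⟨hj, hai.trans (SimpleGraph.Adj.reachable (G := G.induce _) hij)⟩

theorem stmt1_general (G : SimpleGraph V) [DecidableRel G.Adj]
    (hcard : 2 ≤ Fintype.card V) (v : V) (hv : IsCutVertex G v) :
    algConn G ≤ 1 := by
  obtain ⟨A, hvA, hA, hB, hclosed⟩ := hv.exists_separation hcard
  set B := Finset.univ \ insert v A
  have hAB : Disjoint A B := Finset.disjoint_sdiff.mono_left (Finset.subset_insert v A)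
  have hmemB : ∀ i, i ≠ v → (i ∈ B ↔ i ∉ A) := by simp +contextual [B]
  have hconst : ∀ i j, G.Adj i j → i ≠ v → j ≠ v →
      balancedVector A B i = balancedVector A B j := by
    intro i j hij hi hj
    have hiff : i ∈ A ↔ j ∈ A := ⟨hclosed i j hij hj, hclosed j i hij.symm hi⟩
    simp only [balancedVector, hiff, hmemB i hi, hmemB j hj]
  have hzero : balancedVector A B v = 0 := by simp [balancedVector, hvA, B]
  calc algConn G ≤ _ := algConn_le_rayleigh G (balancedVector_ne_zero hAB hA hB)
        (sum_balancedVector A B)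
    _ ≤ 1 := div_le_one_of_le₀ (dotProduct_lapMatrix_mulVec_le_dotProduct_self G hzero hconst)
        (dotProduct_self_star_nonneg _)

theorem stmt1 (G : SimpleGraph V) [DecidableRel G.Adj] (hG : G.Connected)
    (hcard : 2 ≤ Fintype.card V) (v : V) (hv : IsCutVertex G v) :
    algConn G ≤ 1 :=
  stmt1_general G hcard v hv
end

section
/- Let G be a connected graph, v a vertex, and C₁, C₂ connected components of G \ v. If y is a Fiedler vector of G that vanishes on v and on all components of G \ v other than C₁ and C₂, is positive on C₁ and negative on C₂, then λ₂(G) = 1/ρ(L(C₁)⁻¹) = 1/ρ(L(C₂)⁻¹), where restricted to each Cᵢ the vector y is a Perron eigenvector of the bottleneck matrix L(Cᵢ)⁻¹. -/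
open Matrix BigOperators

variable {V : Type*} [Fintype V] [DecidableEq V]

/-- The principal submatrix of the Laplacian of `G` indexed by the vertex set `C`. -/
def lapSub (G : SimpleGraph V) [DecidableRel G.Adj] (C : Finset V) : Matrix C C ℝ :=
  (G.lapMatrix ℝ).submatrix (fun i : C => (i : V)) (fun j : C => (j : V))

/-- The Perron value (largest eigenvalue) of a symmetric real matrix. -/
noncomputable def perronValue {n : Type*} [Fintype n] (M : Matrix n n ℝ) : ℝ :=
  sSup {r : ℝ | ∃ x : n → ℝ, x ≠ 0 ∧ M *ᵥ x = r • x}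

/-! ### Auxiliary lemmas -/

/-- Extension of a vector on a finset by zero. -/
def extFun (C : Finset V) (x : ↥C → ℝ) : V → ℝ := fun u => if h : u ∈ C then x ⟨u, h⟩ else 0

lemma extFun_coe (C : Finset V) (x : ↥C → ℝ) (i : ↥C) : extFun C x ↑i = x i := by
  simp [extFun]

lemma extFun_of_not_mem (C : Finset V) (x : ↥C → ℝ) {u : V} (hu : u ∉ C) : extFun C x u = 0 :=
  dif_neg hu

lemma sum_of_support (C : Finset V) (f : V → ℝ) (hf : ∀ u ∉ C, f u = 0) :
    ∑ u, f u = ∑ u ∈ C, f u :=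
  (Finset.sum_subset (Finset.subset_univ C) (fun u _ hu => hf u hu)).symm

lemma sum_extFun (C : Finset V) (x : ↥C → ℝ) : ∑ u, extFun C x u = ∑ i, x i := by
  rw [sum_of_support C _ (fun u hu => extFun_of_not_mem C x hu), Finset.univ_eq_attach,
    ← Finset.sum_attach C (fun u => extFun C x u)]
  exact Finset.sum_congr rfl (fun i _ => extFun_coe C x i)

lemma dot_lap_restrict (L : Matrix V V ℝ) (a b : V → ℝ) (C D : Finset V)
    (ha : ∀ u ∉ C, a u = 0) (hb : ∀ u ∉ D, b u = 0) :
    a ⬝ᵥ L *ᵥ b = ∑ i ∈ C, ∑ j ∈ D, a i * (L i j * b j) := by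
  have h1 : ∀ i, (L *ᵥ b) i = ∑ j ∈ D, L i j * b j := by
    intro i
    rw [mulVec, dotProduct]
    exact (Finset.sum_subset (Finset.subset_univ D)
      (fun j _ hj => by rw [hb j hj, mul_zero])).symm
  rw [dotProduct, sum_of_support C _ (fun u hu => by rw [ha u hu, zero_mul])]
  exact Finset.sum_congr rfl fun i _ => by rw [h1, Finset.mul_sum]

lemma dot_ext (C : Finset V) (x x' : ↥C → ℝ) :
    (extFun C x) ⬝ᵥ (extFun C x') = x ⬝ᵥ x' := by
  rw [dotProduct, sum_of_support C _ (fun u hu => by rw [extFun_of_not_mem C x hu, zero_mul]),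
    ← Finset.sum_attach C (fun u => extFun C x u * extFun C x' u), dotProduct,
    Finset.univ_eq_attach]
  exact Finset.sum_congr rfl fun i _ => by rw [extFun_coe, extFun_coe]

lemma dot_lap_ext (G : SimpleGraph V) [DecidableRel G.Adj] (C : Finset V) (x x' : ↥C → ℝ) :
    (extFun C x) ⬝ᵥ (G.lapMatrix ℝ) *ᵥ (extFun C x') = x ⬝ᵥ (lapSub G C) *ᵥ x' := by
  rw [dot_lap_restrict _ _ _ C C (fun u hu => extFun_of_not_mem C x hu)
    (fun u hu => extFun_of_not_mem C x' hu),
    ← Finset.sum_attach C (fun i => ∑ j ∈ C, extFun C x i * (G.lapMatrix ℝ i j * extFun C x' j))]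
  rw [dotProduct, Finset.univ_eq_attach]
  refine Finset.sum_congr rfl fun i _ => ?_
  rw [← Finset.sum_attach C
    (fun j => extFun C x ↑i * (G.lapMatrix ℝ ↑i j * extFun C x' j)),
    mulVec, dotProduct, Finset.univ_eq_attach, Finset.mul_sum]
  exact Finset.sum_congr rfl fun j _ => by
    rw [extFun_coe, extFun_coe]; rfl

lemma lap_offdiag_eq_zero (G : SimpleGraph V) [DecidableRel G.Adj] {i j : V}
    (hij : i ≠ j) (hadj : ¬ G.Adj i j) : G.lapMatrix ℝ i j = 0 := by
  simp [SimpleGraph.lapMatrix, SimpleGraph.degMatrix, Matrix.diagonal_apply_ne _ hij, hadj]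

lemma dotProduct_self_nonneg' {n : Type*} [Fintype n] (x : n → ℝ) : 0 ≤ x ⬝ᵥ x :=
  Finset.sum_nonneg fun i _ => mul_self_nonneg _

lemma dotProduct_self_pos {n : Type*} [Fintype n] {x : n → ℝ} (hx : x ≠ 0) :
    0 < x ⬝ᵥ x := by
  rcases (dotProduct_self_nonneg' x).lt_or_eq with h | h
  · exact h
  · exact absurd (dotProduct_self_eq_zero.mp h.symm) hx

theorem stmt10 (G : SimpleGraph V) [DecidableRel G.Adj] (hG : G.Connected)
    (v : V) (hv : IsCutVertex G v)
    (C₁ C₂ : Finset V) (hd : Disjoint C₁ C₂)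
    (hv1 : v ∉ C₁) (hc1 : (G.induce (C₁ : Set V)).Connected)
    (hcl1 : ∀ w ∈ C₁, ∀ x, G.Adj w x → x = v ∨ x ∈ C₁)
    (hv2 : v ∉ C₂) (hc2 : (G.induce (C₂ : Set V)).Connected)
    (hcl2 : ∀ w ∈ C₂, ∀ x, G.Adj w x → x = v ∨ x ∈ C₂)
    (y : V → ℝ) (hy : y ≠ 0)
    (heig : (G.lapMatrix ℝ) *ᵥ y = algConn G • y)
    (hyv : y v = 0)
    (hout : ∀ w, w ≠ v → w ∉ C₁ → w ∉ C₂ → y w = 0)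
    (hpos : ∀ w ∈ C₁, 0 < y w) (hneg : ∀ w ∈ C₂, y w < 0) :
    algConn G = 1 / perronValue (lapSub G C₁)⁻¹ ∧
    algConn G = 1 / perronValue (lapSub G C₂)⁻¹ ∧
    (lapSub G C₁)⁻¹ *ᵥ (fun i : C₁ => y i) =
      perronValue (lapSub G C₁)⁻¹ • (fun i : C₁ => y i) ∧
    (lapSub G C₂)⁻¹ *ᵥ (fun i : C₂ => y i) =
      perronValue (lapSub G C₂)⁻¹ • (fun i : C₂ => y i) := by
  classical
  set L := G.lapMatrix ℝ with hL
  set lam := algConn G with hlamdef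
  have hPSD : ∀ x : V → ℝ, 0 ≤ x ⬝ᵥ L *ᵥ x := by
    intro x
    simpa using (SimpleGraph.posSemidef_lapMatrix ℝ G).dotProduct_mulVec_nonneg x
  -- the algConn set is bounded below by 0
  have hBdd : BddBelow {r : ℝ | ∃ x : V → ℝ, x ≠ 0 ∧ (∑ v, x v) = 0 ∧
      r = (x ⬝ᵥ (G.lapMatrix ℝ) *ᵥ x) / (x ⬝ᵥ x)} := by
    refine ⟨0, ?_⟩
    rintro r ⟨x, hx, -, rfl⟩
    exact div_nonneg (hPSD x) (dotProduct_self_nonneg' x)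
  -- lam ≥ 0, lam ≠ 0
  have hyy : 0 < y ⬝ᵥ y := dotProduct_self_pos hy
  have hlam0 : 0 ≤ lam := by
    have h1 : y ⬝ᵥ L *ᵥ y = lam * (y ⬝ᵥ y) := by
      rw [heig, dotProduct_smul, smul_eq_mul]
    nlinarith [hPSD y]
  have hlamne : lam ≠ 0 := by
    intro h0
    have hzero : L *ᵥ y = 0 := by rw [heig, h0, zero_smul]
    have : Matrix.toLin' L y = 0 := by rw [Matrix.toLin'_apply]; exact hzero
    have hconst := (G.lapMatrix_mulVec_eq_zero_iff_forall_reachable (x := y)).mp hzero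
    apply hy
    funext w
    have := hconst w v (hG.preconnected w v)
    rw [Pi.zero_apply, this, hyv]
  have hlampos : 0 < lam := lt_of_le_of_ne hlam0 (Ne.symm hlamne)
  -- vanishing lemmas
  have hvan1 : ∀ i ∈ C₁, ∀ j ∉ C₁, L i j * y j = 0 := by
    intro i hi j hj
    by_cases hjv : j = v
    · rw [hjv, hyv, mul_zero]
    by_cases hj2 : j ∈ C₂
    · have hne : i ≠ j := fun h => Finset.disjoint_left.mp hd (h ▸ hi) hj2
      have hadj : ¬ G.Adj i j := fun hadj => by
        rcases hcl1 i hi j hadj with rfl | h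
        · exact hjv rfl
        · exact hj h
      rw [hL, lap_offdiag_eq_zero G hne hadj, zero_mul]
    · rw [hout j hjv hj hj2, mul_zero]
  have hvan2 : ∀ i ∈ C₂, ∀ j ∉ C₂, L i j * y j = 0 := by
    intro i hi j hj
    by_cases hjv : j = v
    · rw [hjv, hyv, mul_zero]
    by_cases hj1 : j ∈ C₁
    · have hne : i ≠ j := fun h => Finset.disjoint_right.mp hd (h ▸ hi) hj1
      have hadj : ¬ G.Adj i j := fun hadj => by
        rcases hcl2 i hi j hadj with rfl | h
        · exact hjv rfl
        · exact hj h
      rw [hL, lap_offdiag_eq_zero G hne hadj, zero_mul]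
    · rw [hout j hjv hj1 hj, mul_zero]
  -- restriction eigenvector property
  have hrestr : ∀ (C : Finset V), (∀ i ∈ C, ∀ j ∉ C, L i j * y j = 0) →
      lapSub G C *ᵥ (fun i : C => y i) = lam • (fun i : C => y i) := by
    intro C hvan
    funext i
    have h1 : (L *ᵥ y) ↑i = lam * y ↑i := by rw [heig]; rfl
    have h2 : (L *ᵥ y) ↑i = ∑ j ∈ C, L ↑i j * y j := by
      rw [mulVec, dotProduct]
      exact (Finset.sum_subset (Finset.subset_univ C)
        (fun j _ hj => hvan ↑i i.2 j hj)).symm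
    have h3 : (lapSub G C *ᵥ fun i : C => y ↑i) i = ∑ j ∈ C, L ↑i j * y j := by
      rw [mulVec, dotProduct, Finset.univ_eq_attach,
        ← Finset.sum_attach C (fun j => L ↑i j * y j)]
      rfl
    rw [h3, ← h2, h1]
    rfl
  have heigM1 := hrestr C₁ hvan1
  have heigM2 := hrestr C₂ hvan2
  -- no adjacency across
  have hnadj12 : ∀ i ∈ C₁, ∀ j ∈ C₂, L i j = 0 := by
    intro i hi j hj
    have hne : i ≠ j := fun h => (Finset.disjoint_left.mp hd (h ▸ hi)) hj
    rw [hL]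
    refine lap_offdiag_eq_zero G hne (fun hadj => ?_)
    rcases hcl1 i hi j hadj with rfl | h
    · exact hv2 hj
    · exact Finset.disjoint_left.mp hd h hj
  have hnadj21 : ∀ i ∈ C₂, ∀ j ∈ C₁, L i j = 0 := by
    intro i hi j hj
    have hne : i ≠ j := fun h => (Finset.disjoint_right.mp hd (h ▸ hi)) hj
    rw [hL]
    refine lap_offdiag_eq_zero G hne (fun hadj => ?_)
    rcases hcl2 i hi j hadj with rfl | h
    · exact hv1 hj
    · exact Finset.disjoint_right.mp hd h hj
  -- nonemptiness and restricted vectors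
  obtain ⟨⟨w₁, hw₁⟩⟩ := hc1.nonempty
  obtain ⟨⟨w₂, hw₂⟩⟩ := hc2.nonempty
  have hw₁ : w₁ ∈ C₁ := hw₁
  have hw₂ : w₂ ∈ C₂ := hw₂
  set y₁ : ↥C₁ → ℝ := fun i => y ↑i with hy₁def
  set y₂ : ↥C₂ → ℝ := fun i => y ↑i with hy₂def
  have hy₁ne : y₁ ≠ 0 := by
    intro h
    have := congrFun h ⟨w₁, hw₁⟩
    exact (hpos w₁ hw₁).ne' this
  have hy₂ne : y₂ ≠ 0 := by
    intro h
    have := congrFun h ⟨w₂, hw₂⟩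
    exact (hneg w₂ hw₂).ne this
  have hsum1 : (0:ℝ) < ∑ i, y₁ i := by
    refine Finset.sum_pos (fun i _ => hpos ↑i i.2) ⟨⟨w₁, hw₁⟩, Finset.mem_univ _⟩
  have hsum2 : ∑ i, y₂ i < 0 := by
    refine Finset.sum_neg (fun i _ => hneg ↑i i.2) ⟨⟨w₂, hw₂⟩, Finset.mem_univ _⟩
  -- the key eigenvalue lower bound
  have key : ∀ (C D : Finset V) (yD : ↥D → ℝ), Disjoint C D →
      (∀ i ∈ C, ∀ j ∈ D, L i j = 0) → (∀ i ∈ D, ∀ j ∈ C, L i j = 0) →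
      lapSub G D *ᵥ yD = lam • yD → (∑ i, yD i) ≠ 0 →
      ∀ (μ : ℝ) (x : ↥C → ℝ), x ≠ 0 → lapSub G C *ᵥ x = μ • x → lam ≤ μ := by
    intro C D yD hCD hLCD hLDC heigD hsumD μ x hx heigx
    set a := extFun C x with hadef
    set w := extFun D yD with hwdef
    set t : ℝ := -(∑ i, x i) / (∑ i, yD i) with htdef
    set z : V → ℝ := a + t • w with hzdef
    have ha0 : ∀ u ∉ C, a u = 0 := fun u hu => extFun_of_not_mem C x hu
    have hw0 : ∀ u ∉ D, w u = 0 := fun u hu => extFun_of_not_mem D yD hu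
    -- z ≠ 0
    obtain ⟨i0, hi0⟩ := Function.ne_iff.mp hx
    have hz0 : z ≠ 0 := by
      intro h
      have h1 := congrFun h ↑i0
      have h2 : w ↑i0 = 0 := hw0 ↑i0 (Finset.disjoint_left.mp hCD i0.2)
      simp only [hzdef, Pi.add_apply, Pi.smul_apply, h2, smul_eq_mul, mul_zero, add_zero,
        Pi.zero_apply] at h1
      rw [hadef, extFun_coe] at h1
      exact hi0 h1
    -- sum of z is zero
    have hzsum : ∑ u, z u = 0 := by
      have : ∑ u, z u = (∑ i, x i) + t * (∑ i, yD i) := by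
        simp only [hzdef, Pi.add_apply, Pi.smul_apply, smul_eq_mul, Finset.sum_add_distrib,
          ← Finset.mul_sum, hadef, hwdef, sum_extFun]
      rw [this, htdef, div_mul_cancel₀ _ hsumD]
      ring
    -- quadratic forms
    have haa : a ⬝ᵥ a = x ⬝ᵥ x := dot_ext C x x
    have hww : w ⬝ᵥ w = yD ⬝ᵥ yD := dot_ext D yD yD
    have haw : a ⬝ᵥ w = 0 := by
      rw [dotProduct]
      refine Finset.sum_eq_zero fun u _ => ?_
      by_cases hu : u ∈ C
      · rw [hw0 u (Finset.disjoint_left.mp hCD hu), mul_zero]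
      · rw [ha0 u hu, zero_mul]
    have haLa : a ⬝ᵥ L *ᵥ a = μ * (x ⬝ᵥ x) := by
      rw [hadef, dot_lap_ext, heigx, dotProduct_smul, smul_eq_mul]
    have hwLw : w ⬝ᵥ L *ᵥ w = lam * (yD ⬝ᵥ yD) := by
      rw [hwdef, dot_lap_ext, heigD, dotProduct_smul, smul_eq_mul]
    have haLw : a ⬝ᵥ L *ᵥ w = 0 := by
      rw [dot_lap_restrict L a w C D ha0 hw0]
      exact Finset.sum_eq_zero fun i hi => Finset.sum_eq_zero fun j hj => by
        rw [hLCD i hi j hj, zero_mul, mul_zero]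
    have hwLa : w ⬝ᵥ L *ᵥ a = 0 := by
      rw [dot_lap_restrict L w a D C hw0 ha0]
      exact Finset.sum_eq_zero fun i hi => Finset.sum_eq_zero fun j hj => by
        rw [hLDC i hi j hj, zero_mul, mul_zero]
    have hzLz : z ⬝ᵥ L *ᵥ z = μ * (x ⬝ᵥ x) + t^2 * (lam * (yD ⬝ᵥ yD)) := by
      simp only [hzdef, mulVec_add, mulVec_smul, dotProduct_add, add_dotProduct,
        dotProduct_smul, smul_dotProduct, smul_eq_mul]
      rw [haLa, hwLw, haLw, hwLa]
      ring
    have hzz : z ⬝ᵥ z = (x ⬝ᵥ x) + t^2 * (yD ⬝ᵥ yD) := by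
      have hwa : w ⬝ᵥ a = 0 := by rw [dotProduct_comm]; exact haw
      simp only [hzdef, dotProduct_add, add_dotProduct, dotProduct_smul, smul_dotProduct,
        smul_eq_mul]
      rw [haa, hww, haw, hwa]
      ring
    -- Rayleigh bound
    have hmem : (z ⬝ᵥ (G.lapMatrix ℝ) *ᵥ z) / (z ⬝ᵥ z) ∈ {r : ℝ | ∃ x : V → ℝ, x ≠ 0 ∧
        (∑ v, x v) = 0 ∧ r = (x ⬝ᵥ (G.lapMatrix ℝ) *ᵥ x) / (x ⬝ᵥ x)} :=
      ⟨z, hz0, hzsum, rfl⟩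
    have hray : lam ≤ (z ⬝ᵥ L *ᵥ z) / (z ⬝ᵥ z) := csInf_le hBdd hmem
    have hzzpos : 0 < z ⬝ᵥ z := dotProduct_self_pos hz0
    rw [le_div_iff₀ hzzpos] at hray
    have hxx : 0 < x ⬝ᵥ x := dotProduct_self_pos hx
    have hyDyD : 0 ≤ yD ⬝ᵥ yD := dotProduct_self_nonneg' yD
    rw [hzLz, hzz] at hray
    nlinarith [sq_nonneg t]
  have ev_lb₁ : ∀ (μ : ℝ) (x : ↥C₁ → ℝ), x ≠ 0 → lapSub G C₁ *ᵥ x = μ • x → lam ≤ μ :=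
    key C₁ C₂ y₂ hd hnadj12 hnadj21 heigM2 (ne_of_lt hsum2)
  have ev_lb₂ : ∀ (μ : ℝ) (x : ↥C₂ → ℝ), x ≠ 0 → lapSub G C₂ *ᵥ x = μ • x → lam ≤ μ :=
    key C₂ C₁ y₁ hd.symm hnadj21 hnadj12 heigM1 (ne_of_gt hsum1)
  -- the common part for both components
  have main : ∀ (C : Finset V) (yC : ↥C → ℝ),
      lapSub G C *ᵥ yC = lam • yC → yC ≠ 0 →
      (∀ (μ : ℝ) (x : ↥C → ℝ), x ≠ 0 → lapSub G C *ᵥ x = μ • x → lam ≤ μ) →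
      perronValue (lapSub G C)⁻¹ = lam⁻¹ ∧
      (lapSub G C)⁻¹ *ᵥ yC = perronValue (lapSub G C)⁻¹ • yC := by
    intro C yC heigC hyCne ev_lb
    set M := lapSub G C with hMdef
    have hdet : IsUnit M.det := by
      rw [isUnit_iff_ne_zero]
      intro h0
      obtain ⟨x, hx, hMx⟩ := (Matrix.exists_mulVec_eq_zero_iff).mpr h0
      have : lam ≤ 0 := ev_lb 0 x hx (by rw [hMx, zero_smul])
      exact absurd this (not_le.mpr hlampos)
    have hinv : M⁻¹ *ᵥ yC = lam⁻¹ • yC := by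
      have h1 : M⁻¹ *ᵥ (M *ᵥ yC) = yC := by
        rw [mulVec_mulVec, Matrix.nonsing_inv_mul M hdet, one_mulVec]
      rw [heigC, mulVec_smul] at h1
      calc M⁻¹ *ᵥ yC = lam⁻¹ • (lam • (M⁻¹ *ᵥ yC)) := by
            rw [smul_smul, inv_mul_cancel₀ hlamne, one_smul]
        _ = lam⁻¹ • yC := by rw [h1]
    have hub : ∀ r ∈ {r : ℝ | ∃ x : ↥C → ℝ, x ≠ 0 ∧ M⁻¹ *ᵥ x = r • x}, r ≤ lam⁻¹ := by
      rintro r ⟨x, hx, hrx⟩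
      have h1 : x = r • (M *ᵥ x) := by
        have := congrArg (M *ᵥ ·) hrx
        simp only [mulVec_mulVec, mulVec_smul] at this
        rw [Matrix.mul_nonsing_inv M hdet, one_mulVec] at this
        exact this
      rcases eq_or_ne r 0 with rfl | hr0
      · rw [zero_smul] at h1; exact absurd h1 hx
      have h2 : M *ᵥ x = r⁻¹ • x := by
        calc M *ᵥ x = r⁻¹ • (r • (M *ᵥ x)) := by
              rw [smul_smul, inv_mul_cancel₀ hr0, one_smul]
          _ = r⁻¹ • x := by rw [← h1]
      have h3 : lam ≤ r⁻¹ := ev_lb r⁻¹ x hx h2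
      rcases lt_or_ge 0 r with hr | hr
      · rw [← inv_inv r]
        exact inv_anti₀ hlampos h3
      · exact hr.trans (le_of_lt (inv_pos.mpr hlampos))
    have hmem : lam⁻¹ ∈ {r : ℝ | ∃ x : ↥C → ℝ, x ≠ 0 ∧ M⁻¹ *ᵥ x = r • x} := ⟨yC, hyCne, hinv⟩
    have hperron : perronValue M⁻¹ = lam⁻¹ := by
      apply le_antisymm
      · exact csSup_le ⟨lam⁻¹, hmem⟩ hub
      · exact le_csSup ⟨lam⁻¹, hub⟩ hmem
    exact ⟨hperron, by rw [hperron]; exact hinv⟩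
  obtain ⟨hp1, he1⟩ := main C₁ y₁ heigM1 hy₁ne ev_lb₁
  obtain ⟨hp2, he2⟩ := main C₂ y₂ heigM2 hy₂ne ev_lb₂
  refine ⟨?_, ?_, he1, he2⟩
  · rw [hp1, one_div, inv_inv]
  · rw [hp2, one_div, inv_inv]
end

section
/- Let G be a connected graph and v a cut vertex whose removal yields connected components C₁, ..., C_p. If C₁ and C₂ are isomorphic as graphs (via an isomorphism compatible with adjacency to v), then the vector that equals a Perron eigenvector x of L(C₁)⁻¹ on C₁, equals -x (transported by the isomorphism) on C₂, and is zero elsewhere, is an eigenvector of L(G) with eigenvalue 1/ρ(L(C₁)⁻¹). -/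
open Matrix BigOperators

variable {V : Type*} [Fintype V] [DecidableEq V]

/-!
The bijection `φ`, extended by `φ⁻¹` on `C₂` and by the identity elsewhere, is an automorphism
`σ` of `G` fixing `v`: both components meet the rest of `G` only through `v`, and `φ` respects
adjacency inside `C₁` and to `v`. If `y` is `x` extended by zero, then `z = y - y ∘ σ`. As `C₁` is
attached to the rest of `G` only at `v`, `L(G) y` agrees with `L(C₁) x = ρ⁻¹ x` away from `v`;
since `L(G)` commutes with `σ`, `L(G) z = ρ⁻¹ z` away from `v`, and at `v` both sides vanish
because `σ v = v`.
-/

open SimpleGraph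

namespace SimpleGraph.Iso

variable {W R : Type*} [Fintype W] [DecidableEq W] {G : SimpleGraph V} {H : SimpleGraph W}
  [DecidableRel G.Adj] [DecidableRel H.Adj]

theorem submatrix_lapMatrix [AddGroupWithOne R] (σ : G ≃g H) :
    (H.lapMatrix R).submatrix σ σ = G.lapMatrix R := by
  ext a b
  simp [lapMatrix, degMatrix, diagonal_apply, σ.map_adj_iff]

theorem lapMatrix_mulVec_comp [Ring R] (σ : G ≃g H) (y : W → R) :
    G.lapMatrix R *ᵥ (y ∘ σ) = (H.lapMatrix R *ᵥ y) ∘ σ := by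
  rw [← σ.submatrix_lapMatrix, ← RelIso.coe_fn_toEquiv, submatrix_mulVec_equiv, Function.comp_assoc,
    Equiv.self_comp_symm, Function.comp_id]

end SimpleGraph.Iso

theorem Matrix.mulVec_eq_inv_smul_of_inv_mulVec_eq {n K : Type*} [Fintype n] [DecidableEq n]
    [Field K] {M : Matrix n n K} (hM : IsUnit M.det) {x : n → K} {ρ : K}
    (h : M⁻¹ *ᵥ x = ρ • x) : M *ᵥ x = ρ⁻¹ • x := by
  have hx : ρ • (M *ᵥ x) = x := by
    rw [← mulVec_smul, ← h, mulVec_mulVec, mul_nonsing_inv _ hM, one_mulVec]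
  rcases eq_or_ne ρ 0 with rfl | hρ
  · rw [← hx]
    simp
  · rwa [eq_inv_smul_iff₀ hρ]

theorem SimpleGraph.lapMatrix_apply_eq_zero {α R : Type*} [Fintype α] [DecidableEq α]
    [AddGroupWithOne R] (G : SimpleGraph α) [DecidableRel G.Adj] {a b : α} (hne : a ≠ b)
    (hnadj : ¬ G.Adj a b) : G.lapMatrix R a b = 0 := by
  simp [lapMatrix, degMatrix, hne, hnadj]

section ExtendZero

variable {α R : Type*} [DecidableEq α] {C : Finset α}

def extendZero [Zero R] (C : Finset α) (y : C → R) (w : α) : R :=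
  if h : w ∈ C then y ⟨w, h⟩ else 0

@[simp]
theorem extendZero_apply_coe [Zero R] (y : C → R) (a : C) : extendZero C y a = y a :=
  dif_pos a.2

theorem extendZero_apply_of_notMem [Zero R] (y : C → R) {w : α} (hw : w ∉ C) :
    extendZero C y w = 0 :=
  dif_neg hw

theorem extendZero_smul {S : Type*} [Zero R] [SMulZeroClass S R] (c : S) (y : C → R) :
    extendZero C (c • y) = c • extendZero C y := by
  funext w
  by_cases hw : w ∈ C
  · lift w to C using hw
    simp
  · simp [extendZero_apply_of_notMem _ hw]

variable [Fintype α]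

theorem dotProduct_extendZero [NonUnitalNonAssocSemiring R] (f : α → R) (y : C → R) :
    f ⬝ᵥ extendZero C y = (f ∘ (↑)) ⬝ᵥ y := by
  rw [dotProduct, ← Finset.sum_subset (Finset.subset_univ C) fun w _ hw => by
    rw [extendZero_apply_of_notMem y hw, mul_zero], ← Finset.sum_coe_sort C]
  simp [dotProduct]

theorem mulVec_extendZero_apply_coe [NonUnitalNonAssocSemiring R] (M : Matrix α α R) (y : C → R)
    (a : C) : (M *ᵥ extendZero C y) a = (M.submatrix (↑) (↑) *ᵥ y) a :=
  dotProduct_extendZero _ y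

theorem extendZero_dotProduct_mulVec [NonUnitalCommSemiring R] (M : Matrix α α R) (y : C → R) :
    extendZero C y ⬝ᵥ (M *ᵥ extendZero C y) = y ⬝ᵥ (M.submatrix (↑) (↑) *ᵥ y) := by
  rw [dotProduct_comm, dotProduct_extendZero, dotProduct_comm]
  exact congrArg _ (funext (mulVec_extendZero_apply_coe M y))

end ExtendZero

theorem isUnit_det_lapSub {G : SimpleGraph V} [DecidableRel G.Adj] (hG : G.Connected) {v : V}
    {C : Finset V} (hv : v ∉ C) : IsUnit (lapSub G C).det := by
  rw [isUnit_iff_ne_zero]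
  intro hdet
  obtain ⟨y, hy0, hy⟩ := exists_mulVec_eq_zero_iff.2 hdet
  have hq : toLinearMap₂' ℝ (G.lapMatrix ℝ) (extendZero C y) (extendZero C y) = 0 := by
    rw [toLinearMap₂'_apply', extendZero_dotProduct_mulVec]
    exact hy ▸ dotProduct_zero y
  have hconst := (lapMatrix_toLinearMap₂'_apply'_eq_zero_iff_forall_reachable G _).1 hq
  refine hy0 (funext fun a => ?_)
  simpa [extendZero_apply_of_notMem y hv] using hconst a v (hG.preconnected a v)

theorem lapMatrix_mulVec_extendZero_of_ne {G : SimpleGraph V} [DecidableRel G.Adj] {v : V}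
    {C : Finset V} (hC : ∀ w ∈ C, ∀ u, G.Adj w u → u = v ∨ u ∈ C) (y : C → ℝ) {w : V}
    (hw : w ≠ v) : (G.lapMatrix ℝ *ᵥ extendZero C y) w = extendZero C (lapSub G C *ᵥ y) w := by
  by_cases hwC : w ∈ C
  · lift w to C using hwC
    rw [extendZero_apply_coe]
    exact mulVec_extendZero_apply_coe _ y w
  · rw [extendZero_apply_of_notMem _ hwC, mulVec, dotProduct_extendZero]
    refine Finset.sum_eq_zero fun a _ => ?_
    have hnadj : ¬ G.Adj w a := fun h => (hC a a.2 w h.symm).elim hw hwC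
    have hne : w ≠ a := (ne_of_mem_of_not_mem a.2 hwC).symm
    rw [Function.comp_apply, G.lapMatrix_apply_eq_zero hne hnadj, zero_mul]

section SwapVia

variable {α : Type*} [DecidableEq α] {C₁ C₂ : Finset α}

def swapVia (φ : C₁ ≃ C₂) (w : α) : α :=
  if h : w ∈ C₁ then φ ⟨w, h⟩ else if h : w ∈ C₂ then φ.symm ⟨w, h⟩ else w

theorem swapVia_apply_left (φ : C₁ ≃ C₂) (a : C₁) : swapVia φ a = φ a :=
  dif_pos a.2

theorem swapVia_apply_right (hd : Disjoint C₁ C₂) (φ : C₁ ≃ C₂) (b : C₂) :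
    swapVia φ b = φ.symm b := by
  rw [swapVia, dif_neg (Finset.disjoint_right.1 hd b.2), dif_pos b.2]

theorem swapVia_apply_of_notMem (φ : C₁ ≃ C₂) {w : α} (h₁ : w ∉ C₁) (h₂ : w ∉ C₂) :
    swapVia φ w = w := by
  rw [swapVia, dif_neg h₁, dif_neg h₂]

theorem swapVia_involutive (hd : Disjoint C₁ C₂) (φ : C₁ ≃ C₂) :
    Function.Involutive (swapVia φ) := by
  intro w
  by_cases h₁ : w ∈ C₁
  · lift w to C₁ using h₁
    rw [swapVia_apply_left, swapVia_apply_right hd, φ.symm_apply_apply]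
  by_cases h₂ : w ∈ C₂
  · lift w to C₂ using h₂
    rw [swapVia_apply_right hd, swapVia_apply_left, φ.apply_symm_apply]
  rw [swapVia_apply_of_notMem φ h₁ h₂, swapVia_apply_of_notMem φ h₁ h₂]

theorem extendZero_sub_extendZero_swapVia {R : Type*} [AddGroup R] (hd : Disjoint C₁ C₂)
    (φ : C₁ ≃ C₂) (x : C₁ → R) (w : α) : extendZero C₁ x w - extendZero C₁ x (swapVia φ w) =
      if h : w ∈ C₁ then x ⟨w, h⟩ else if h : w ∈ C₂ then -x (φ.symm ⟨w, h⟩) else 0 := by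
  by_cases h₁ : w ∈ C₁
  · lift w to C₁ using h₁
    rw [swapVia_apply_left, extendZero_apply_of_notMem x (Finset.disjoint_right.1 hd (φ w).2)]
    simp
  by_cases h₂ : w ∈ C₂
  · lift w to C₂ using h₂
    rw [swapVia_apply_right hd, extendZero_apply_of_notMem x h₁]
    simp [h₁]
  rw [swapVia_apply_of_notMem φ h₁ h₂, sub_self, dif_neg h₁, dif_neg h₂]

variable {G : SimpleGraph α} {v : α} {φ : C₁ ≃ C₂}

theorem adj_swapVia_of_mem_left (hv₁ : v ∉ C₁) (hv₂ : v ∉ C₂)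
    (hC₁ : ∀ w ∈ C₁, ∀ u, G.Adj w u → u = v ∨ u ∈ C₁)
    (hφ : ∀ a b : C₁, G.Adj a b ↔ G.Adj (φ a) (φ b)) (hφv : ∀ a : C₁, G.Adj v a ↔ G.Adj v (φ a))
    (a : C₁) {b : α}
    (h : G.Adj a b) : G.Adj (swapVia φ a) (swapVia φ b) := by
  rw [swapVia_apply_left]
  obtain rfl | hb := hC₁ a a.2 b h
  · rw [swapVia_apply_of_notMem φ hv₁ hv₂]
    exact ((hφv a).1 h.symm).symm
  · lift b to C₁ using hb
    rw [swapVia_apply_left]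
    exact (hφ a b).1 h

theorem adj_swapVia_of_mem_right (hd : Disjoint C₁ C₂) (hv₁ : v ∉ C₁) (hv₂ : v ∉ C₂)
    (hC₂ : ∀ w ∈ C₂, ∀ u, G.Adj w u → u = v ∨ u ∈ C₂)
    (hφ : ∀ a b : C₁, G.Adj a b ↔ G.Adj (φ a) (φ b)) (hφv : ∀ a : C₁, G.Adj v a ↔ G.Adj v (φ a))
    (a : C₂) {b : α}
    (h : G.Adj a b) : G.Adj (swapVia φ a) (swapVia φ b) := by
  rw [swapVia_apply_right hd]
  obtain rfl | hb := hC₂ a a.2 b h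
  · rw [swapVia_apply_of_notMem φ hv₁ hv₂]
    refine ((hφv (φ.symm a)).2 ?_).symm
    simpa using h.symm
  · lift b to C₂ using hb
    rw [swapVia_apply_right hd]
    exact (hφ _ _).2 (by simpa using h)

theorem adj_swapVia_iff (hd : Disjoint C₁ C₂) (hv₁ : v ∉ C₁) (hv₂ : v ∉ C₂)
    (hC₁ : ∀ w ∈ C₁, ∀ u, G.Adj w u → u = v ∨ u ∈ C₁)
    (hC₂ : ∀ w ∈ C₂, ∀ u, G.Adj w u → u = v ∨ u ∈ C₂)
    (hφ : ∀ a b : C₁, G.Adj a b ↔ G.Adj (φ a) (φ b)) (hφv : ∀ a : C₁, G.Adj v a ↔ G.Adj v (φ a))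
    (a b : α) :
    G.Adj (swapVia φ a) (swapVia φ b) ↔ G.Adj a b := by
  have inside : ∀ a b, a ∈ C₁ ∨ a ∈ C₂ → G.Adj a b → G.Adj (swapVia φ a) (swapVia φ b) := by
    rintro a b (ha | ha) h
    · lift a to C₁ using ha
      exact adj_swapVia_of_mem_left hv₁ hv₂ hC₁ hφ hφv a h
    · lift a to C₂ using ha
      exact adj_swapVia_of_mem_right hd hv₁ hv₂ hC₂ hφ hφv a h
  have forward : ∀ a b, G.Adj a b → G.Adj (swapVia φ a) (swapVia φ b) := by
    intro a b h
    by_cases ha : a ∈ C₁ ∨ a ∈ C₂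
    · exact inside a b ha h
    by_cases hb : b ∈ C₁ ∨ b ∈ C₂
    · exact (inside b a hb h.symm).symm
    rw [not_or] at ha hb
    rwa [swapVia_apply_of_notMem φ ha.1 ha.2, swapVia_apply_of_notMem φ hb.1 hb.2]
  refine ⟨fun h => ?_, forward a b⟩
  simpa only [swapVia_involutive hd φ _] using forward _ _ h

end SwapVia

theorem lapMatrix_mulVec_sub_comp_eq_smul {R : Type*} [Ring R] {G : SimpleGraph V}
    [DecidableRel G.Adj] (σ : G ≃g G) {v : V} (hσ : σ v = v) {y : V → R} {μ : R}
    (hy : ∀ w ≠ v, (G.lapMatrix R *ᵥ y) w = μ * y w) :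
    G.lapMatrix R *ᵥ (y - y ∘ σ) = μ • (y - y ∘ σ) := by
  rw [mulVec_sub, σ.lapMatrix_mulVec_comp]
  funext w
  simp only [Pi.sub_apply, Function.comp_apply, Pi.smul_apply, smul_eq_mul]
  by_cases hw : w = v
  · rw [hw, hσ, sub_self, sub_self, mul_zero]
  · have hσw : σ w ≠ v := fun h => hw (σ.injective (h.trans hσ.symm))
    rw [hy w hw, hy _ hσw, mul_sub]

theorem stmt13_general (G : SimpleGraph V) [DecidableRel G.Adj] (hG : G.Connected)
    (v : V)
    (C₁ C₂ : Finset V) (hd : Disjoint C₁ C₂)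
    (hv1 : v ∉ C₁)
    (hcl1 : ∀ w ∈ C₁, ∀ x, G.Adj w x → x = v ∨ x ∈ C₁)
    (hv2 : v ∉ C₂)
    (hcl2 : ∀ w ∈ C₂, ∀ x, G.Adj w x → x = v ∨ x ∈ C₂)
    (φ : C₁ ≃ C₂)
    (hφ : ∀ a b : C₁, G.Adj (a : V) (b : V) ↔ G.Adj ((φ a : V)) ((φ b : V)))
    (hφv : ∀ a : C₁, G.Adj v (a : V) ↔ G.Adj v ((φ a : V)))
    (x : C₁ → ℝ)
    (hxe : (lapSub G C₁)⁻¹ *ᵥ x = perronValue (lapSub G C₁)⁻¹ • x)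
    (z : V → ℝ)
    (hz : ∀ w, z w = if h : w ∈ C₁ then x ⟨w, h⟩
      else if h : w ∈ C₂ then -x (φ.symm ⟨w, h⟩) else 0) :
    (G.lapMatrix ℝ) *ᵥ z = (1 / perronValue (lapSub G C₁)⁻¹) • z := by
  have hx : lapSub G C₁ *ᵥ x = (1 / perronValue (lapSub G C₁)⁻¹) • x := by
    rw [one_div]
    exact mulVec_eq_inv_smul_of_inv_mulVec_eq (isUnit_det_lapSub hG hv1) hxe
  let σ : G ≃g G :=
    ⟨(swapVia_involutive hd φ).toPerm _, adj_swapVia_iff hd hv1 hv2 hcl1 hcl2 hφ hφv _ _⟩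
  have hz' : z = extendZero C₁ x - extendZero C₁ x ∘ σ :=
    funext fun w => (hz w).trans (extendZero_sub_extendZero_swapVia hd φ x w).symm
  rw [hz']
  refine lapMatrix_mulVec_sub_comp_eq_smul σ (swapVia_apply_of_notMem φ hv1 hv2) fun w hw => ?_
  rw [lapMatrix_mulVec_extendZero_of_ne hcl1 x hw, hx, extendZero_smul, Pi.smul_apply, smul_eq_mul]

theorem stmt13 (G : SimpleGraph V) [DecidableRel G.Adj] (hG : G.Connected)
    (v : V) (hv : IsCutVertex G v)
    (C₁ C₂ : Finset V) (hd : Disjoint C₁ C₂)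
    (hv1 : v ∉ C₁) (hc1 : (G.induce (C₁ : Set V)).Connected)
    (hcl1 : ∀ w ∈ C₁, ∀ x, G.Adj w x → x = v ∨ x ∈ C₁)
    (hv2 : v ∉ C₂) (hc2 : (G.induce (C₂ : Set V)).Connected)
    (hcl2 : ∀ w ∈ C₂, ∀ x, G.Adj w x → x = v ∨ x ∈ C₂)
    (φ : C₁ ≃ C₂)
    (hφ : ∀ a b : C₁, G.Adj (a : V) (b : V) ↔ G.Adj ((φ a : V)) ((φ b : V)))
    (hφv : ∀ a : C₁, G.Adj v (a : V) ↔ G.Adj v ((φ a : V)))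
    (x : C₁ → ℝ) (hx : ∀ i, 0 < x i)
    (hxe : (lapSub G C₁)⁻¹ *ᵥ x = perronValue (lapSub G C₁)⁻¹ • x)
    (z : V → ℝ)
    (hz : ∀ w, z w = if h : w ∈ C₁ then x ⟨w, h⟩
      else if h : w ∈ C₂ then -x (φ.symm ⟨w, h⟩) else 0) :
    (G.lapMatrix ℝ) *ᵥ z = (1 / perronValue (lapSub G C₁)⁻¹) • z :=
  stmt13_general G hG v C₁ C₂ hd hv1 hcl1 hv2 hcl2 φ hφ hφv x hxe z hz
end
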